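/- If a potential φ is sound for the game G (i.e., φ(v) ≤ En_G(v) for all v) and a potential φ' is sound for the modified game G_φ (i.e., φ'(v) ≤ En_{G_φ}(v) for all v), then the potential φ + φ' is sound for G, that is, φ(v) + φ'(v) ≤ En_G(v) for all v ∈ V. -/

import Mathlib

attribute [local instance] Classical.propDecidable

/-- A game: a directed graph `E` on vertex set `V` with no sink, edge weights `wt : V → V → R`,
and a partition of the vertices into those belonging to Min (`isMin`) and to Max (the rest). -/
structure Game (V : Type) (R : Type) where
  E : V → V → Prop
  wt : V → V → R
  isMin : V → Prop
  nosink : ∀ v, ∃ u, E v u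

namespace Game

variable {V : Type} {R : Type}

/-- A strategy for Min: a choice of an outgoing edge at every Min vertex. -/
def MinStrat (G : Game V R) : Type := {σ : V → V // ∀ v, G.isMin v → G.E v (σ v)}

/-- A strategy for Max: a choice of an outgoing edge at every Max vertex. -/
def MaxStrat (G : Game V R) : Type := {τ : V → V // ∀ v, ¬ G.isMin v → G.E v (τ v)}

/-- An infinite path in the graph. -/
def IsPath (G : Game V R) (π : ℕ → V) : Prop := ∀ i, G.E (π i) (π (i + 1))

/-- Consistency of an infinite path with a Min strategy. -/
def ConsMin (G : Game V R) (σ : G.MinStrat) (π : ℕ → V) : Prop :=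
  ∀ i, G.isMin (π i) → π (i + 1) = σ.1 (π i)

/-- Consistency of an infinite path with a Max strategy. -/
def ConsMax (G : Game V R) (τ : G.MaxStrat) (π : ℕ → V) : Prop :=
  ∀ i, ¬ G.isMin (π i) → π (i + 1) = τ.1 (π i)

/-- Infinite paths starting in `v` consistent with the Min strategy `σ`. -/
def PlaysMin (G : Game V R) (σ : G.MinStrat) (v : V) : Type :=
  {π : ℕ → V // π 0 = v ∧ G.IsPath π ∧ G.ConsMin σ π}

/-- Infinite paths starting in `v` consistent with the Max strategy `τ`. -/
def PlaysMax (G : Game V R) (τ : G.MaxStrat) (v : V) : Type :=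
  {π : ℕ → V // π 0 = v ∧ G.IsPath π ∧ G.ConsMax τ π}

/-- The sequence of weights along an infinite path. -/
def wseq (G : Game V R) (π : ℕ → V) : ℕ → R := fun i => G.wt (π i) (π (i + 1))

/-- Embedding of `ℤ ∪ {∞}` into the extended reals. -/
noncomputable def toE (x : WithTop ℤ) : EReal :=
  if h : x = ⊤ then ⊤ else (((x.untop h : ℤ) : ℝ) : EReal)

/-- Embedding of `ℕ ∪ {∞}` into the extended reals. -/
noncomputable def enatToE (x : ENat) : EReal :=
  if x = ⊤ then ⊤ else ((x.toNat : ℝ) : EReal)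

/-- Conversion `ℤ ∪ {∞} → ℕ ∪ {∞}` (exact on non-negative values). -/
noncomputable def wToN (x : WithTop ℤ) : ENat :=
  if h : x = ⊤ then ⊤ else ((x.untop h).toNat : ENat)

/-- The mean-payoff valuation `MP(w₀w₁⋯) = limsup_k (1/k) ∑_{i<k} w_i`. -/
noncomputable def MPv (w : ℕ → ℤ) : EReal :=
  Filter.limsup
    (fun k : ℕ => ((((∑ i ∈ Finset.range k, w i : ℤ) : ℝ) / (k : ℝ) : ℝ) : EReal))
    Filter.atTop

/-- The energy valuation `En(w₀w₁⋯) = sup_k ∑_{i<k} w_i` (weights given in `EReal`). -/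
noncomputable def En (w : ℕ → EReal) : EReal :=
  ⨆ k : ℕ, ∑ i ∈ Finset.range k, w i

/-- The positive-energy valuation `En⁺(w₀w₁⋯) = ∑_{i<k¬} w_i ∈ ℕ ∪ {∞}` where `k¬` is the
first index of a negative weight (the whole, possibly infinite, sum if no weight is negative). -/
noncomputable def EnP (w : ℕ → WithTop ℤ) : ENat :=
  if h : ∃ k, w k < 0 then ∑ i ∈ Finset.range (Nat.find h), wToN (w i)
  else ⨆ k : ℕ, ∑ i ∈ Finset.range k, wToN (w i)

/-- The mean-payoff value of a vertex:
`MP_G(v) = inf over Min strategies σ of sup over plays π from v consistent with σ of MP(w(π))`. -/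
noncomputable def MPVal (G : Game V ℤ) (v : V) : EReal :=
  ⨅ σ : G.MinStrat, ⨆ π : G.PlaysMin σ v, MPv (G.wseq π.1)

/-- The energy value of a vertex. -/
noncomputable def EnVal (G : Game V (WithTop ℤ)) (v : V) : EReal :=
  ⨅ σ : G.MinStrat, ⨆ π : G.PlaysMin σ v, En (fun i => toE (G.wseq π.1 i))

/-- The positive-energy value of a vertex. -/
noncomputable def EnPVal (G : Game V (WithTop ℤ)) (v : V) : ENat :=
  ⨅ σ : G.MinStrat, ⨆ π : G.PlaysMin σ v, EnP (G.wseq π.1)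

/-- Lift a game with integer weights to a game with weights in `ℤ ∪ {∞}`. -/
def liftZ (G : Game V ℤ) : Game V (WithTop ℤ) :=
  { E := G.E, wt := fun u v => (G.wt u v : WithTop ℤ), isMin := G.isMin, nosink := G.nosink }

/-- The `φ`-modified weight: `w_φ(v,v') = w(v,v') + φ(v') − φ(v)` when `w(v,v')`, `φ(v)`, `φ(v')`
are all finite, and `∞` otherwise. -/
noncomputable def modWt (w : V → V → WithTop ℤ) (φ : V → ENat) (u v : V) : WithTop ℤ :=
  if w u v = ⊤ ∨ φ u = ⊤ ∨ φ v = ⊤ then ⊤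
  else (((w u v).untopD 0 + ((φ v).toNat : ℤ) - ((φ u).toNat : ℤ) : ℤ) : WithTop ℤ)

/-- The `φ`-modified game `G_φ`. -/
noncomputable def modify (G : Game V (WithTop ℤ)) (φ : V → ENat) : Game V (WithTop ℤ) :=
  { G with wt := modWt G.wt φ }

/-- `π 0 → π 1 → ⋯ → π k` is a simple cycle: `k ≥ 1`, consecutive edges, `π k = π 0`,
and `π 0, …, π (k-1)` pairwise distinct. -/
def IsSimpleCycle (G : Game V R) (π : ℕ → V) (k : ℕ) : Prop :=
  1 ≤ k ∧ (∀ i < k, G.E (π i) (π (i + 1))) ∧ π k = π 0 ∧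
    ∀ i < k, ∀ j < k, π i = π j → i = j

/-- A game is simple if every simple cycle has nonzero sum of weights. -/
def IsSimpleR [AddCommMonoid R] (G : Game V R) : Prop :=
  ∀ π k, IsSimpleCycle G π k → (∑ i ∈ Finset.range k, G.wt (π i) (π (i + 1))) ≠ 0

/-- `W = max_{e ∈ E} |w(e)|`. -/
noncomputable def maxW (G : Game V ℤ) [Fintype V] : ℕ :=
  Finset.sup Finset.univ (fun p : V × V => if G.E p.1 p.2 then (G.wt p.1 p.2).natAbs else 0)

/-- The ESL iteration: `G₀ = G` and `G_{j+1} = (G_j)_{φ_j}` where `φ_j = En⁺_{G_j}`. -/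
noncomputable def esl (G : Game V (WithTop ℤ)) : ℕ → Game V (WithTop ℤ)
  | 0 => G
  | j + 1 => modify (esl G j) (EnPVal (esl G j))

/-- The accumulated ESL potential `Φ_j = φ₀ + ⋯ + φ_{j−1}`. -/
noncomputable def eslPhi (G : Game V (WithTop ℤ)) (j : ℕ) (v : V) : ENat :=
  ∑ i ∈ Finset.range j, EnPVal (esl G i) v

/-- The set of vertices from which Min can ensure to immediately visit a negative-weight edge:
Min vertices with some negative outgoing edge, and Max vertices all of whose outgoing edges
are negative. -/
def NegSet (G : Game V (WithTop ℤ)) : Set V :=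
  {v | (G.isMin v ∧ ∃ u, G.E v u ∧ G.wt v u < 0) ∨
       (¬ G.isMin v ∧ ∀ u, G.E v u → G.wt v u < 0)}

end Game

/-! Fix a Min strategy `σ`. Because `σ` is positional, after any prefix of a `σ`-play from `v`
with energy `S_k` Max may restart from `π k`, where soundness of `φ` lets him force `φ (π k)`
more; hence `S_k + φ (π k)` is bounded by the value of `σ` at `v`. Along a play the
`φ`-modified weights telescope, `φ (π 0) + S^φ_m = S_m + φ (π m)`, so `φ v` plus any energy
reached in `G_φ` is bounded by the same value, and soundness of `φ'` for `G_φ` concludes. -/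

theorem EReal.add_iSup_le {ι : Sort*} {a b : EReal} {f : ι → EReal} (h : ∀ i, a + f i ≤ b) :
    a + ⨆ i, f i ≤ b :=
  EReal.add_le_of_forall_lt fun _ ha' _ hc' =>
    let ⟨i, hi⟩ := lt_iSup_iff.1 hc'
    (add_le_add ha'.le hi.le).trans (h i)

theorem Finset.add_sum_range_telescope {M : Type*} [AddCommMonoid M] (a b g : ℕ → M) (m : ℕ)
    (h : ∀ i < m, g i + a i = b i + g (i + 1)) :
    g 0 + ∑ i ∈ range m, a i = ∑ i ∈ range m, b i + g m := by
  induction m with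
  | zero => simp
  | succ m ih =>
    rw [sum_range_succ, sum_range_succ, ← add_assoc, ih fun i hi => h i (by omega), add_assoc,
      h m m.lt_succ_self, add_assoc]

namespace Game

variable {V : Type}

lemma toE_ne_bot (x : WithTop ℤ) : toE x ≠ ⊥ := by
  unfold toE; split <;> simp

lemma toE_coe (z : ℤ) : toE z = ((z : ℝ) : EReal) := by simp [toE]

lemma enatToE_top : enatToE ⊤ = ⊤ := by simp [enatToE]

lemma enatToE_coe (n : ℕ) : enatToE n = ((n : ℝ) : EReal) := by simp [enatToE]

lemma enatToE_ne_bot (x : ENat) : enatToE x ≠ ⊥ := by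
  induction x using ENat.recTopCoe with
  | top => simp [enatToE_top]
  | coe n => rw [enatToE_coe]; exact EReal.coe_ne_bot _

lemma enatToE_add (a b : ENat) : enatToE (a + b) = enatToE a + enatToE b := by
  induction a using ENat.recTopCoe with
  | top => rw [top_add, enatToE_top, EReal.top_add_of_ne_bot (enatToE_ne_bot b)]
  | coe a =>
    induction b using ENat.recTopCoe with
    | top => rw [add_top, enatToE_top, EReal.add_top_of_ne_bot (enatToE_ne_bot a)]
    | coe b => rw [← Nat.cast_add, enatToE_coe, enatToE_coe, enatToE_coe]; push_cast; rfl

lemma enatToE_add_toE_modWt {w : V → V → WithTop ℤ} {φ : V → ENat} {u u' : V}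
    (hu : φ u ≠ ⊤) (hu' : φ u' ≠ ⊤) :
    enatToE (φ u) + toE (modWt w φ u u') = toE (w u u') + enatToE (φ u') := by
  obtain ⟨a, ha⟩ := ENat.ne_top_iff_exists.1 hu
  obtain ⟨b, hb⟩ := ENat.ne_top_iff_exists.1 hu'
  by_cases hw : w u u' = ⊤
  · simp [modWt, hw, toE, EReal.top_add_of_ne_bot, EReal.add_top_of_ne_bot, enatToE_ne_bot]
  · obtain ⟨z, hz⟩ := WithTop.ne_top_iff_exists.1 hw
    rw [modWt, if_neg (by simp [hw, hu, hu']), ← ha, ← hb, ← hz, WithTop.untopD_coe,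
      ENat.toNat_natCast, ENat.toNat_natCast, toE_coe, toE_coe, enatToE_coe, enatToE_coe]
    norm_cast
    ring

def concatAt (π : ℕ → V) (k : ℕ) (π' : ℕ → V) : ℕ → V :=
  fun j => if j < k then π j else π' (j - k)

section concatAt

variable {π π' : ℕ → V} {k : ℕ}

lemma concatAt_of_le (hk : π' 0 = π k) {j : ℕ} (hj : j ≤ k) : concatAt π k π' j = π j := by
  rcases hj.lt_or_eq with hj | rfl
  · simp [concatAt, hj]
  · simp [concatAt, hk]

lemma concatAt_add (j : ℕ) : concatAt π k π' (k + j) = π' j := by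
  simp [concatAt]

lemma concatAt_step {R : V → V → Prop} (hk : π' 0 = π k) (hπ : ∀ i, R (π i) (π (i + 1)))
    (hπ' : ∀ i, R (π' i) (π' (i + 1))) (i : ℕ) :
    R (concatAt π k π' i) (concatAt π k π' (i + 1)) := by
  rcases lt_or_ge i k with hi | hi
  · rw [concatAt_of_le hk hi.le, concatAt_of_le hk hi]
    exact hπ i
  · obtain ⟨j, rfl⟩ := Nat.exists_eq_add_of_le hi
    rw [concatAt_add, add_assoc, concatAt_add]
    exact hπ' j

lemma sum_range_concatAt {M : Type*} [AddCommMonoid M] (g : V → V → M) (hk : π' 0 = π k)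
    (m : ℕ) :
    ∑ i ∈ Finset.range (k + m), g (concatAt π k π' i) (concatAt π k π' (i + 1)) =
      ∑ i ∈ Finset.range k, g (π i) (π (i + 1)) +
        ∑ i ∈ Finset.range m, g (π' i) (π' (i + 1)) := by
  rw [Finset.sum_range_add]
  congr 1
  · refine Finset.sum_congr rfl fun i hi => ?_
    rw [concatAt_of_le hk (Finset.mem_range.1 hi).le, concatAt_of_le hk (Finset.mem_range.1 hi)]
  · refine Finset.sum_congr rfl fun i _ => ?_
    rw [concatAt_add, add_assoc, concatAt_add]

end concatAt

def PlaysMin.concat {R : Type} {G : Game V R} {σ : G.MinStrat} {v : V} (π : G.PlaysMin σ v)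
    (k : ℕ) (π' : G.PlaysMin σ (π.1 k)) : G.PlaysMin σ v :=
  ⟨concatAt π.1 k π'.1, (concatAt_of_le π'.2.1 k.zero_le).trans π.2.1,
    concatAt_step π'.2.1 π.2.2.1 π'.2.2.1,
    concatAt_step (R := fun a b => G.isMin a → b = σ.1 a) π'.2.1 π.2.2.2 π'.2.2.2⟩

noncomputable def partialSum (G : Game V (WithTop ℤ)) (π : ℕ → V) (k : ℕ) : EReal :=
  ∑ i ∈ Finset.range k, toE (G.wseq π i)

noncomputable def stratVal (G : Game V (WithTop ℤ)) (σ : G.MinStrat) (v : V) : EReal :=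
  ⨆ π : G.PlaysMin σ v, ⨆ k, partialSum G π.1 k

lemma EnVal_le_stratVal (G : Game V (WithTop ℤ)) (σ : G.MinStrat) (v : V) :
    EnVal G v ≤ stratVal G σ v :=
  iInf_le _ σ

section Values

variable {G : Game V (WithTop ℤ)} {σ : G.MinStrat} {v : V}

lemma partialSum_concatAt {π π' : ℕ → V} {k : ℕ} (hk : π' 0 = π k) (m : ℕ) :
    partialSum G (concatAt π k π') (k + m) = partialSum G π k + partialSum G π' m :=
  sum_range_concatAt (fun a b => toE (G.wt a b)) hk m

lemma partialSum_ne_bot (π : ℕ → V) (k : ℕ) : partialSum G π k ≠ ⊥ :=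
  Finset.sum_induction _ (· ≠ ⊥) (fun _ _ ha hb => EReal.add_ne_bot_iff.2 ⟨ha, hb⟩)
    (by simp) fun _ _ => toE_ne_bot _

lemma partialSum_le_stratVal (π : G.PlaysMin σ v) (k : ℕ) :
    partialSum G π.1 k ≤ stratVal G σ v :=
  (le_iSup (fun k => partialSum G π.1 k) k).trans
    (le_iSup (fun π : G.PlaysMin σ v => ⨆ k, partialSum G π.1 k) π)

/-- Min's strategy is positional, so after `k` steps of a play Max may restart from `π k`. -/
lemma partialSum_add_stratVal_le (π : G.PlaysMin σ v) (k : ℕ) :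
    partialSum G π.1 k + stratVal G σ (π.1 k) ≤ stratVal G σ v :=
  EReal.add_iSup_le fun π' => EReal.add_iSup_le fun m => by
    rw [← partialSum_concatAt π'.2.1]
    exact partialSum_le_stratVal (π.concat k π') (k + m)

lemma partialSum_add_potential_le {φ : V → ENat} (hφ : ∀ u, enatToE (φ u) ≤ EnVal G u)
    (π : G.PlaysMin σ v) (k : ℕ) :
    partialSum G π.1 k + enatToE (φ (π.1 k)) ≤ stratVal G σ v :=
  (add_le_add_right ((hφ _).trans (EnVal_le_stratVal G σ _)) _).trans
    (partialSum_add_stratVal_le π k)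

lemma potential_add_partialSum_modify (φ : V → ENat) (π : ℕ → V) (m : ℕ)
    (hfin : ∀ i ≤ m, φ (π i) ≠ ⊤) :
    enatToE (φ (π 0)) + partialSum (modify G φ) π m = partialSum G π m + enatToE (φ (π m)) :=
  Finset.add_sum_range_telescope _ _ (fun i => enatToE (φ (π i))) m fun i hi =>
    enatToE_add_toE_modWt (hfin i hi.le) (hfin (i + 1) hi)

lemma potential_add_partialSum_modify_le {φ : V → ENat}
    (hφ : ∀ u, enatToE (φ u) ≤ EnVal G u) (π : G.PlaysMin σ v) (m : ℕ) :
    enatToE (φ v) + partialSum (modify G φ) π.1 m ≤ stratVal G σ v := by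
  by_cases hfin : ∀ i ≤ m, φ (π.1 i) ≠ ⊤
  · calc enatToE (φ v) + partialSum (modify G φ) π.1 m
        = partialSum G π.1 m + enatToE (φ (π.1 m)) := by
          rw [← potential_add_partialSum_modify φ π.1 m hfin, π.2.1]
      _ ≤ stratVal G σ v := partialSum_add_potential_le hφ π m
  · -- then `φ (π i) = ⊤` for some `i ≤ m`, which already forces the value of `σ` to be `⊤`
    push Not at hfin
    obtain ⟨i, -, hi⟩ := hfin
    have h := partialSum_add_potential_le hφ π i
    rw [hi, enatToE_top, EReal.add_top_of_ne_bot (partialSum_ne_bot _ _), top_le_iff] at h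
    exact h ▸ le_top

/-- `modify` changes only the weights, so the strategies and plays of `G_φ` are those of `G`. -/
lemma potential_add_stratVal_modify_le {φ : V → ENat}
    (hφ : ∀ u, enatToE (φ u) ≤ EnVal G u) :
    enatToE (φ v) + stratVal (modify G φ) σ v ≤ stratVal G σ v :=
  EReal.add_iSup_le fun π => EReal.add_iSup_le fun m => potential_add_partialSum_modify_le hφ π m

end Values

end Game

open Game

theorem sound_composition_general {V : Type} (G : Game V (WithTop ℤ))
    (φ φ' : V → ENat)
    (hφ : ∀ v, enatToE (φ v) ≤ EnVal G v)
    (hφ' : ∀ v, enatToE (φ' v) ≤ EnVal (modify G φ) v) :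
    ∀ v, enatToE (φ v + φ' v) ≤ EnVal G v := by
  intro v
  refine le_iInf fun σ => ?_
  show _ ≤ stratVal G σ v
  calc enatToE (φ v + φ' v)
      = enatToE (φ v) + enatToE (φ' v) := enatToE_add _ _
    _ ≤ enatToE (φ v) + stratVal (modify G φ) σ v :=
        add_le_add_right ((hφ' v).trans (EnVal_le_stratVal (modify G φ) σ v)) _
    _ ≤ stratVal G σ v := potential_add_stratVal_modify_le hφ

/-- Composition of sound potentials: if `φ` is sound for `G` and `φ'` is sound for `G_φ`,
then `φ + φ'` is sound for `G`. -/
theorem sound_composition {V : Type} [Fintype V] (G : Game V (WithTop ℤ))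
    (φ φ' : V → ENat)
    (hφ : ∀ v, enatToE (φ v) ≤ EnVal G v)
    (hφ' : ∀ v, enatToE (φ' v) ≤ EnVal (modify G φ) v) :
    ∀ v, enatToE (φ v + φ' v) ≤ EnVal G v :=
  sound_composition_general G φ φ' hφ hφ'
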